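/- For each fixed j, the sequence N ↦ ξ_j^{(N)*} (for N ≥ j) is strictly decreasing in N, where (ξ_j^{(N)*})_{j=1}^N is the unique maximizer of T_N. -/

import Mathlib

open Real

/-- The finite-horizon throughput functional `T_N` (log base 2), evaluated at a
sequence indexed from 1 (only coordinates `1,…,N` matter). -/
noncomputable def TN (B γ p : ℝ) (w N : ℕ) (ξ : ℕ → ℝ) : ℝ :=
  (∑ k ∈ Finset.Icc 1 w, p ^ 2 * (1 - p) ^ (k - 1) * ((k : ℝ) / 2) *
      Real.logb 2 (1 + γ * B / k))
  + (∑ j ∈ Finset.Icc 1 N, p * (1 - p) ^ (j + w - 1) * (1 / 2) *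
      Real.logb 2 (1 + γ * ξ j))
  + (∑ k ∈ Finset.Icc 1 N, p ^ 2 * (1 - p) ^ (k + w - 1) * ((w : ℝ) / 2) *
      Real.logb 2 (1 + (γ / w) * (B - ∑ j ∈ Finset.Icc 1 k, ξ j)))
  + p * (1 - p) ^ (w + N) * ((w : ℝ) / 2) *
      Real.logb 2 (1 + (γ / w) * (B - ∑ j ∈ Finset.Icc 1 N, ξ j))

/-- The admissible simplex `{ξ : ξ_j ≥ 0, ∑_{j=1}^N ξ_j ≤ B}`, as sequences supported
on coordinates `1,…,N`. -/
def adm (B : ℝ) (N : ℕ) : Set (ℕ → ℝ) :=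
  {ξ | (∀ j, 1 ≤ j → j ≤ N → 0 ≤ ξ j) ∧ (∀ j, j = 0 ∨ N < j → ξ j = 0)
      ∧ ∑ j ∈ Finset.Icc 1 N, ξ j ≤ B}

open Finset

/-!
Write `u_i = (1 + γ ξ_i)⁻¹` and `h_i = (1 + (γ/w)(B - ξ_1 - ⋯ - ξ_i))⁻¹`. Moving a maximizer of
`T_N` along a single coordinate shows that it spends strictly less than `B` and has positive
coordinates, so every partial derivative vanishes; differencing consecutive ones gives the KKT
recursion `u_i = (1 - p) u_{i+1} + p h_i` for `i < N` and the terminal equation `u_N = h_N`.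

Through the recursion, a larger first coordinate forces every later coordinate and partial sum to
be larger. For the longer horizon `M` the recursion continues past `N`, and since `h` increases this
forces `h_N < u_N`; as `u_N = h_N` for horizon `N`, the maximizer for `M` must start strictly lower,
and the strict comparison then propagates to every `j ≤ N`.
-/

noncomputable def partialSum (ξ : ℕ → ℝ) (k : ℕ) : ℝ := ∑ j ∈ Icc 1 k, ξ j

noncomputable def invOneAddMul (c t : ℝ) : ℝ := (1 + c * t)⁻¹

-- Up to the factor `γ p (1 - p) ^ (w - 1) / (2 log 2)`, the partial derivative of `T_N` in `ξ_i`.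
noncomputable def marginalGain (B γ p : ℝ) (w N : ℕ) (ξ : ℕ → ℝ) (i : ℕ) : ℝ :=
  (1 - p) ^ i * invOneAddMul γ (ξ i)
    - ∑ k ∈ Icc i N, p * (1 - p) ^ k * invOneAddMul (γ / w) (B - partialSum ξ k)
    - (1 - p) ^ (N + 1) * invOneAddMul (γ / w) (B - partialSum ξ N)

-- `euler` is the KKT recursion and `terminal` the equation `ξ_N = (B - ∑ ξ) / w`.
structure IsKKTPoint (B γ p : ℝ) (w N : ℕ) (ξ : ℕ → ℝ) : Prop where
  pos : ∀ i, 1 ≤ i → i ≤ N → 0 < ξ i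
  slack : partialSum ξ N < B
  euler : ∀ i, 1 ≤ i → i < N → invOneAddMul γ (ξ i) =
    (1 - p) * invOneAddMul γ (ξ (i + 1)) + p * invOneAddMul (γ / w) (B - partialSum ξ i)
  terminal : invOneAddMul γ (ξ N) = invOneAddMul (γ / w) (B - partialSum ξ N)

lemma partialSum_zero (ξ : ℕ → ℝ) : partialSum ξ 0 = 0 := by simp [partialSum]

lemma partialSum_succ (ξ : ℕ → ℝ) (k : ℕ) : partialSum ξ (k + 1) = partialSum ξ k + ξ (k + 1) :=
  sum_Icc_succ_top (by omega) ξ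

lemma partialSum_mono {N k l : ℕ} {ξ : ℕ → ℝ} (hξ : ∀ j, 1 ≤ j → j ≤ N → 0 ≤ ξ j) (hkl : k ≤ l)
    (hl : l ≤ N) : partialSum ξ k ≤ partialSum ξ l :=
  sum_le_sum_of_subset_of_nonneg (Icc_subset_Icc_right hkl) fun j hj _ =>
    hξ j (mem_Icc.1 hj).1 ((mem_Icc.1 hj).2.trans hl)

lemma partialSum_le_of_mem_adm {B : ℝ} {N k : ℕ} {ξ : ℕ → ℝ} (hξ : ξ ∈ adm B N) (hk : k ≤ N) :
    partialSum ξ k ≤ B :=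
  (partialSum_mono hξ.1 hk le_rfl).trans hξ.2.2

lemma partialSum_add_smul (x v : ℕ → ℝ) (t : ℝ) (k : ℕ) :
    partialSum (x + t • v) k = partialSum x k + t * partialSum v k := by
  simp [partialSum, sum_add_distrib, mul_sum]

lemma partialSum_single {i : ℕ} (hi : 1 ≤ i) (a : ℝ) (k : ℕ) :
    partialSum (Pi.single i a) k = if i ≤ k then a else 0 := by
  simp [partialSum, sum_pi_single', hi]

lemma invOneAddMul_zero (c : ℝ) : invOneAddMul c 0 = 1 := by simp [invOneAddMul]

lemma invOneAddMul_le_one {c t : ℝ} (hc : 0 ≤ c) (ht : 0 ≤ t) : invOneAddMul c t ≤ 1 :=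
  inv_le_one_of_one_le₀ (le_add_of_nonneg_right (mul_nonneg hc ht))

lemma invOneAddMul_lt_one {c t : ℝ} (hc : 0 < c) (ht : 0 < t) : invOneAddMul c t < 1 :=
  inv_lt_one_of_one_lt₀ (lt_add_of_pos_right 1 (mul_pos hc ht))

lemma strictAntiOn_invOneAddMul {c : ℝ} (hc : 0 < c) : StrictAntiOn (invOneAddMul c) (Set.Ici 0) :=
  fun s hs t _ hst => inv_strictAnti₀ (by have : (0:ℝ) ≤ s := hs; positivity) (by gcongr)

lemma sum_Icc_mul_pow_add_pow (p : ℝ) {i N : ℕ} (h : i ≤ N) :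
    ∑ k ∈ Icc i N, p * (1 - p) ^ k + (1 - p) ^ (N + 1) = (1 - p) ^ i := by
  induction N, h using Nat.le_induction with
  | base => simp; ring
  | succ n hn ih => rw [sum_Icc_succ_top (by omega), ← ih]; ring

lemma marginalGain_eq_sub_one_add (B γ p : ℝ) (w N : ℕ) (ξ : ℕ → ℝ) {i : ℕ} (hi : i ≤ N) :
    marginalGain B γ p w N ξ i = (1 - p) ^ i * (invOneAddMul γ (ξ i) - 1)
      + ∑ k ∈ Icc i N, p * (1 - p) ^ k * (1 - invOneAddMul (γ / w) (B - partialSum ξ k))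
      + (1 - p) ^ (N + 1) * (1 - invOneAddMul (γ / w) (B - partialSum ξ N)) := by
  simp only [marginalGain, mul_sub, mul_one, sum_sub_distrib]
  linear_combination -sum_Icc_mul_pow_add_pow p hi

lemma marginalGain_sub_marginalGain_succ (B γ p : ℝ) (w N : ℕ) (ξ : ℕ → ℝ) {i : ℕ} (hi : i < N) :
    marginalGain B γ p w N ξ i - marginalGain B γ p w N ξ (i + 1) = (1 - p) ^ i *
      (invOneAddMul γ (ξ i) - (1 - p) * invOneAddMul γ (ξ (i + 1))
        - p * invOneAddMul (γ / w) (B - partialSum ξ i)) := by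
  rw [marginalGain, marginalGain, Icc_eq_cons_Ioc hi.le, sum_cons, ← Icc_add_one_left_eq_Ioc]
  ring

lemma marginalGain_self (B γ p : ℝ) (w N : ℕ) (ξ : ℕ → ℝ) :
    marginalGain B γ p w N ξ N = (1 - p) ^ N *
      (invOneAddMul γ (ξ N) - invOneAddMul (γ / w) (B - partialSum ξ N)) := by
  rw [marginalGain, Icc_self, sum_singleton]
  ring

lemma HasDerivAt.logb_one_add_mul {f : ℝ → ℝ} {f' x : ℝ} (c : ℝ) (hf : HasDerivAt f f' x)
    (h : 1 + c * f x ≠ 0) :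
    HasDerivAt (fun t => Real.logb 2 (1 + c * f t)) (c * f' / ((1 + c * f x) * Real.log 2)) x := by
  have := (((hf.const_mul c).const_add 1).log h).div_const (Real.log 2)
  rwa [div_div] at this

lemma hasDerivAt_TN_add_smul (B γ p : ℝ) (w N : ℕ) (x v : ℕ → ℝ)
    (hx : ∀ j ∈ Icc 1 N, 1 + γ * x j ≠ 0)
    (hS : ∀ k ≤ N, 1 + γ / w * (B - partialSum x k) ≠ 0) :
    HasDerivAt (fun t : ℝ => TN B γ p w N (x + t • v))
      (∑ j ∈ Icc 1 N, p * (1 - p) ^ (j + w - 1) * (1 / 2) * (γ * v j / ((1 + γ * x j) * log 2))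
        + ∑ k ∈ Icc 1 N, p ^ 2 * (1 - p) ^ (k + w - 1) * (w / 2) *
            (γ / w * -partialSum v k / ((1 + γ / w * (B - partialSum x k)) * log 2))
        + p * (1 - p) ^ (w + N) * (w / 2) *
            (γ / w * -partialSum v N / ((1 + γ / w * (B - partialSum x N)) * log 2))) 0 := by
  have hcoord (j : ℕ) : HasDerivAt (fun t : ℝ => (x + t • v) j) (v j) 0 := by
    simpa using ((hasDerivAt_id (0:ℝ)).mul_const (v j)).const_add (x j)
  have hlogCoord (j : ℕ) (hj : j ∈ Icc 1 N) (c : ℝ) :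
      HasDerivAt (fun t : ℝ => c * logb 2 (1 + γ * (x + t • v) j))
        (c * (γ * v j / ((1 + γ * x j) * log 2))) 0 := by
    simpa using ((hcoord j).logb_one_add_mul γ (by simpa using hx j hj)).const_mul c
  have hlogBudget (k : ℕ) (hk : k ≤ N) (c : ℝ) :
      HasDerivAt (fun t : ℝ => c * logb 2 (1 + γ / w * (B - ∑ j ∈ Icc 1 k, (x + t • v) j)))
        (c * (γ / w * -partialSum v k / ((1 + γ / w * (B - partialSum x k)) * log 2))) 0 := by
    have hbudget :
        HasDerivAt (fun t : ℝ => B - ∑ j ∈ Icc 1 k, (x + t • v) j) (-partialSum v k) 0 := by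
      simpa [partialSum] using (HasDerivAt.fun_sum fun j _ => hcoord j).const_sub B
    simpa [partialSum] using
      (hbudget.logb_one_add_mul (γ / w) (by simpa [partialSum] using hS k hk)).const_mul c
  exact ((((hasDerivAt_const _ _).add (HasDerivAt.fun_sum fun j hj => hlogCoord j hj _)).add
    (HasDerivAt.fun_sum fun k hk => hlogBudget k (mem_Icc.1 hk).2 _)).add
    (hlogBudget N le_rfl _)).congr_deriv (by simp)

lemma hasDerivAt_TN_add_smul_single {B γ p : ℝ} {w N i : ℕ} {x : ℕ → ℝ} (hγ : 0 < γ)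
    (hw : 0 < w) (hx : x ∈ adm B N) (hi : i ∈ Icc 1 N) :
    HasDerivAt (fun t : ℝ => TN B γ p w N (x + t • Pi.single i 1))
      (γ * p * (1 - p) ^ (w - 1) / (2 * log 2) * marginalGain B γ p w N x i) 0 := by
  have hZ (k : ℕ) (hk : k ≤ N) : 0 < 1 + γ / w * (B - partialSum x k) := by
    have := sub_nonneg.2 (partialSum_le_of_mem_adm hx hk); positivity
  have hpow (k : ℕ) : (1 - p) ^ (k + w - 1) = (1 - p) ^ k * (1 - p) ^ (w - 1) := by
    rw [Nat.add_sub_assoc hw, pow_add]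
  refine (hasDerivAt_TN_add_smul B γ p w N x _ (fun j hj => ?_)
    fun k hk => (hZ k hk).ne').congr_deriv ?_
  · have := hx.1 j (mem_Icc.1 hj).1 (mem_Icc.1 hj).2; positivity
  obtain ⟨hi1, hiN⟩ := mem_Icc.1 hi
  have hxi : 0 < 1 + γ * x i := by have := hx.1 i hi1 hiN; positivity
  set K := γ * p * (1 - p) ^ (w - 1) / (2 * log 2) with hK
  have hcoordTerms : ∑ j ∈ Icc 1 N, p * (1 - p) ^ (j + w - 1) * (1 / 2) *
      (γ * (Pi.single i 1 : ℕ → ℝ) j / ((1 + γ * x j) * log 2)) =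
      K * ((1 - p) ^ i * invOneAddMul γ (x i)) := by
    rw [sum_eq_single_of_mem i hi fun j _ hj => by simp [hj], Pi.single_eq_same, hpow,
      invOneAddMul, hK]
    field_simp
  have hbudgetTerms : ∑ k ∈ Icc 1 N, p ^ 2 * (1 - p) ^ (k + w - 1) * (w / 2) *
      (γ / w * -partialSum (Pi.single i 1) k / ((1 + γ / w * (B - partialSum x k)) * log 2)) =
      -(K * ∑ k ∈ Icc i N, p * (1 - p) ^ k * invOneAddMul (γ / w) (B - partialSum x k)) := by
    have hfilter : (Icc 1 N).filter (i ≤ ·) = Icc i N := by ext k; simp; omega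
    rw [← hfilter, sum_filter, mul_sum, ← sum_neg_distrib]
    refine sum_congr rfl fun k hk => ?_
    rw [partialSum_single hi1]
    split_ifs
    · have := hZ k (mem_Icc.1 hk).2
      rw [hpow, invOneAddMul, hK]
      field_simp
    · simp
  have hlastTerm : p * (1 - p) ^ (w + N) * (w / 2) *
      (γ / w * -partialSum (Pi.single i 1) N / ((1 + γ / w * (B - partialSum x N)) * log 2)) =
      -(K * ((1 - p) ^ (N + 1) * invOneAddMul (γ / w) (B - partialSum x N))) := by
    have := hZ N le_rfl
    rw [partialSum_single hi1, if_pos hiN, show w + N = N + 1 + w - 1 by omega, hpow,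
      invOneAddMul, hK]
    field_simp
  rw [hcoordTerms, hbudgetTerms, hlastTerm, marginalGain]
  ring

lemma add_smul_single_mem_adm {B t : ℝ} {N i : ℕ} {x : ℕ → ℝ} (hx : x ∈ adm B N)
    (hi : i ∈ Icc 1 N) (ht : t ∈ Set.Icc (-x i) (B - partialSum x N)) :
    x + t • Pi.single i 1 ∈ adm B N := by
  obtain ⟨hnonneg, hsupp, hbudget⟩ := hx
  refine ⟨fun j hj1 hjN => ?_, fun j hj => ?_, ?_⟩
  · rcases eq_or_ne j i with rfl | hji
    · simp; linarith [ht.1]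
    · simpa [hji] using hnonneg j hj1 hjN
  · have hji : j ≠ i := by rintro rfl; simp at hi; omega
    simpa [hji] using hsupp j hj
  · change partialSum _ N ≤ B
    rw [partialSum_add_smul, partialSum_single (mem_Icc.1 hi).1, if_pos (mem_Icc.1 hi).2]
    linarith [ht.2]

section Optimality

variable {B γ p : ℝ} {w N : ℕ} {x : ℕ → ℝ}

lemma mul_marginalGain_nonpos_of_isMaxOn (hγ : 0 < γ) (hp : 0 < p) (hp1 : p < 1) (hw : 0 < w)
    (hx : x ∈ adm B N) (hmax : IsMaxOn (TN B γ p w N) (adm B N) x) {i : ℕ} (hi : i ∈ Icc 1 N)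
    {y : ℝ} (hy : y ∈ Set.Icc (-x i) (B - partialSum x N)) :
    y * marginalGain B γ p w N x i ≤ 0 := by
  have h0 : (0 : ℝ) ∈ Set.Icc (-x i) (B - partialSum x N) :=
    ⟨neg_nonpos.2 (hx.1 i (mem_Icc.1 hi).1 (mem_Icc.1 hi).2),
      sub_nonneg.2 (partialSum_le_of_mem_adm hx le_rfl)⟩
  have hline : IsMaxOn (fun t : ℝ => TN B γ p w N (x + t • Pi.single i 1))
      (Set.Icc (-x i) (B - partialSum x N)) 0 := fun t ht => by
    simpa using hmax (add_smul_single_mem_adm hx hi ht)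
  have hK : 0 < γ * p * (1 - p) ^ (w - 1) / (2 * log 2) := by
    have : 0 < 1 - p := sub_pos.2 hp1
    positivity
  have := hline.localize.hasFDerivWithinAt_nonpos
    (hasDerivAt_TN_add_smul_single hγ hw hx hi).hasFDerivAt.hasFDerivWithinAt
    (mem_posTangentConeAt_of_segment_subset
      ((convex_Icc _ _).segment_subset h0 (by simpa using hy)))
  simp only [ContinuousLinearMap.toSpanSingleton_apply, smul_eq_mul, mul_left_comm y] at this
  exact nonpos_of_mul_nonpos_right this hK

lemma marginalGain_nonneg_of_isMaxOn (hγ : 0 < γ) (hp : 0 < p) (hp1 : p < 1) (hw : 0 < w)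
    (hx : x ∈ adm B N) (hmax : IsMaxOn (TN B γ p w N) (adm B N) x) {i : ℕ} (hi : i ∈ Icc 1 N)
    (hxi : 0 < x i) : 0 ≤ marginalGain B γ p w N x i := by
  have := mul_marginalGain_nonpos_of_isMaxOn hγ hp hp1 hw hx hmax hi (y := -x i)
    ⟨le_rfl, by linarith [partialSum_le_of_mem_adm hx le_rfl]⟩
  rw [neg_mul, neg_nonpos] at this
  exact nonneg_of_mul_nonneg_right this hxi

lemma marginalGain_nonpos_of_isMaxOn (hγ : 0 < γ) (hp : 0 < p) (hp1 : p < 1) (hw : 0 < w)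
    (hx : x ∈ adm B N) (hmax : IsMaxOn (TN B γ p w N) (adm B N) x) {i : ℕ} (hi : i ∈ Icc 1 N)
    (hslack : partialSum x N < B) : marginalGain B γ p w N x i ≤ 0 := by
  have := mul_marginalGain_nonpos_of_isMaxOn hγ hp hp1 hw hx hmax hi (y := B - partialSum x N)
    ⟨by linarith [hx.1 i (mem_Icc.1 hi).1 (mem_Icc.1 hi).2], le_rfl⟩
  exact nonpos_of_mul_nonpos_right this (sub_pos.2 hslack)

lemma partialSum_lt_of_isMaxOn (hB : 0 < B) (hγ : 0 < γ) (hp : 0 < p) (hp1 : p < 1) (hw : 0 < w)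
    (hx : x ∈ adm B N) (hmax : IsMaxOn (TN B γ p w N) (adm B N) x) : partialSum x N < B := by
  classical
  refine (partialSum_le_of_mem_adm hx le_rfl).lt_of_ne fun hfull => ?_
  -- The first index `i` with `partialSum x i = B` has `x i > 0`, while every later budget term of
  -- `marginalGain` is `1`; so the marginal gain at `i` is negative, yet lowering `x i` cannot help.
  have hex : ∃ k, partialSum x k = B := ⟨N, hfull⟩
  set i := Nat.find hex
  have hspec : partialSum x i = B := Nat.find_spec hex
  have hiN : i ≤ N := Nat.find_min' hex hfull
  have hi0 : i ≠ 0 := fun h => by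
    rw [h, partialSum_zero] at hspec
    exact hB.ne hspec
  have hxi : 0 < x i := by
    have hprev : partialSum x (i - 1) < B :=
      (partialSum_le_of_mem_adm hx (by omega)).lt_of_ne (Nat.find_min hex (by omega))
    have := partialSum_succ x (i - 1)
    rw [Nat.sub_add_cancel (by omega), hspec] at this
    linarith
  have hsat (k : ℕ) (hk : k ∈ Icc i N) : invOneAddMul (γ / w) (B - partialSum x k) = 1 := by
    rw [le_antisymm (partialSum_le_of_mem_adm hx (mem_Icc.1 hk).2)
      (hspec ▸ partialSum_mono hx.1 (mem_Icc.1 hk).1 (mem_Icc.1 hk).2), sub_self,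
      invOneAddMul_zero]
  have hgain := marginalGain_nonneg_of_isMaxOn hγ hp hp1 hw hx hmax
    (mem_Icc.2 ⟨Nat.one_le_iff_ne_zero.2 hi0, hiN⟩) hxi
  rw [marginalGain_eq_sub_one_add _ _ _ _ _ _ hiN, sum_congr rfl fun k hk => by rw [hsat k hk],
    hsat N (mem_Icc.2 ⟨hiN, le_rfl⟩)] at hgain
  simp only [sub_self, mul_zero, sum_const_zero, add_zero] at hgain
  exact (mul_neg_of_pos_of_neg (pow_pos (sub_pos.2 hp1) i)
    (sub_neg.2 (invOneAddMul_lt_one hγ hxi))).not_ge hgain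

lemma pos_of_isMaxOn (hB : 0 < B) (hγ : 0 < γ) (hp : 0 < p) (hp1 : p < 1) (hw : 0 < w)
    (hx : x ∈ adm B N) (hmax : IsMaxOn (TN B γ p w N) (adm B N) x) {i : ℕ} (hi : i ∈ Icc 1 N) :
    0 < x i := by
  obtain ⟨hi1, hiN⟩ := mem_Icc.1 hi
  refine (hx.1 i hi1 hiN).lt_of_ne fun hxi => ?_
  have hslack := partialSum_lt_of_isMaxOn hB hγ hp hp1 hw hx hmax
  have hc : 0 < γ / w := by positivity
  have h1p : 0 < 1 - p := sub_pos.2 hp1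
  have hgain := marginalGain_nonpos_of_isMaxOn hγ hp hp1 hw hx hmax hi hslack
  rw [marginalGain_eq_sub_one_add _ _ _ _ _ _ hiN, ← hxi, invOneAddMul_zero, sub_self, mul_zero,
    zero_add] at hgain
  have hterms : 0 ≤ ∑ k ∈ Icc i N,
      p * (1 - p) ^ k * (1 - invOneAddMul (γ / w) (B - partialSum x k)) :=
    sum_nonneg fun k hk => mul_nonneg (by positivity) <| sub_nonneg.2 <|
      invOneAddMul_le_one hc.le (sub_nonneg.2 (partialSum_le_of_mem_adm hx (mem_Icc.1 hk).2))
  have hlast : 0 < (1 - p) ^ (N + 1) * (1 - invOneAddMul (γ / w) (B - partialSum x N)) :=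
    mul_pos (pow_pos h1p _) (sub_pos.2 (invOneAddMul_lt_one hc (sub_pos.2 hslack)))
  linarith

lemma isKKTPoint_of_isMaxOn (hB : 0 < B) (hγ : 0 < γ) (hp : 0 < p) (hp1 : p < 1) (hw : 0 < w)
    (hN : 1 ≤ N) (hx : x ∈ adm B N) (hmax : IsMaxOn (TN B γ p w N) (adm B N) x) :
    IsKKTPoint B γ p w N x := by
  have hslack := partialSum_lt_of_isMaxOn hB hγ hp hp1 hw hx hmax
  have hpos (i : ℕ) (hi : i ∈ Icc 1 N) := pos_of_isMaxOn hB hγ hp hp1 hw hx hmax hi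
  have hzero (i : ℕ) (hi : i ∈ Icc 1 N) : marginalGain B γ p w N x i = 0 :=
    (marginalGain_nonpos_of_isMaxOn hγ hp hp1 hw hx hmax hi hslack).antisymm
      (marginalGain_nonneg_of_isMaxOn hγ hp hp1 hw hx hmax hi (hpos i hi))
  have hpow (i : ℕ) : (1 - p) ^ i ≠ 0 := pow_ne_zero _ (sub_pos.2 hp1).ne'
  refine ⟨fun i hi hiN => hpos i (mem_Icc.2 ⟨hi, hiN⟩), hslack, fun i hi hiN => ?_, ?_⟩
  · have := marginalGain_sub_marginalGain_succ B γ p w N x hiN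
    rw [hzero i (mem_Icc.2 ⟨hi, hiN.le⟩), hzero (i + 1) (mem_Icc.2 ⟨by omega, hiN⟩), sub_zero,
      eq_comm, mul_eq_zero_iff_left (hpow i)] at this
    linarith
  · have := marginalGain_self B γ p w N x
    rw [hzero N (mem_Icc.2 ⟨hN, le_rfl⟩), eq_comm, mul_eq_zero_iff_left (hpow N)] at this
    linarith

end Optimality

namespace IsKKTPoint

variable {B γ p : ℝ} {w N M : ℕ} {ξ η : ℕ → ℝ}

lemma partialSum_lt (hξ : IsKKTPoint B γ p w N ξ) {k : ℕ} (hk : k ≤ N) : partialSum ξ k < B :=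
  (partialSum_mono (fun j h1 h2 => (hξ.pos j h1 h2).le) hk le_rfl).trans_lt hξ.slack

lemma sub_partialSum_mem_Ici (hξ : IsKKTPoint B γ p w N ξ) {k : ℕ} (hk : k ≤ N) :
    B - partialSum ξ k ∈ Set.Ici 0 :=
  sub_nonneg.2 (hξ.partialSum_lt hk).le

lemma apply_mem_Ici (hξ : IsKKTPoint B γ p w N ξ) {i : ℕ} (hi : 1 ≤ i) (hiN : i ≤ N) :
    ξ i ∈ Set.Ici 0 :=
  (hξ.pos i hi hiN).le

lemma invOneAddMul_sub_partialSum_lt_succ (hξ : IsKKTPoint B γ p w N ξ) (hγ : 0 < γ) (hw : 0 < w)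
    {i : ℕ} (hi : i < N) :
    invOneAddMul (γ / w) (B - partialSum ξ i) < invOneAddMul (γ / w) (B - partialSum ξ (i + 1)) :=
  strictAntiOn_invOneAddMul (by positivity) (hξ.sub_partialSum_mem_Ici hi)
    (hξ.sub_partialSum_mem_Ici hi.le) <| by
    rw [partialSum_succ]; linarith [hξ.pos (i + 1) (by omega) hi]

lemma invOneAddMul_sub_partialSum_lt (hξ : IsKKTPoint B γ p w N ξ) (hγ : 0 < γ) (hp1 : p < 1)
    (hw : 0 < w) {i : ℕ} (hi : 1 ≤ i) (hiN : i < N) :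
    invOneAddMul (γ / w) (B - partialSum ξ i) < invOneAddMul γ (ξ i) := by
  have hstep (k : ℕ) (hk : 1 ≤ k) (hkN : k < N)
      (hsucc : invOneAddMul (γ / w) (B - partialSum ξ (k + 1)) ≤ invOneAddMul γ (ξ (k + 1))) :
      invOneAddMul (γ / w) (B - partialSum ξ k) < invOneAddMul γ (ξ k) := by
    have := hξ.invOneAddMul_sub_partialSum_lt_succ hγ hw hkN
    rw [hξ.euler k hk hkN]
    nlinarith
  have hweak (k : ℕ) (hk : 1 ≤ k) (hkN : k ≤ N) :
      invOneAddMul (γ / w) (B - partialSum ξ k) ≤ invOneAddMul γ (ξ k) := by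
    induction hkN using Nat.decreasingInduction with
    | self => exact hξ.terminal.ge
    | of_succ k hkN ih => exact (hstep k hk hkN (ih (by omega))).le
  exact hstep i hi hiN (hweak (i + 1) (by omega) hiN)

lemma apply_succ_le (hξ : IsKKTPoint B γ p w N ξ) (hη : IsKKTPoint B γ p w M η) (hγ : 0 < γ)
    (hp : 0 ≤ p) (hp1 : p < 1) (hw : 0 < w) {i : ℕ} (hi : 1 ≤ i) (hiN : i < N) (hiM : i < M)
    (hle : ξ i ≤ η i) (hS : partialSum ξ i ≤ partialSum η i) : ξ (i + 1) ≤ η (i + 1) := by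
  have hu := ((strictAntiOn_invOneAddMul hγ).le_iff_ge (hη.apply_mem_Ici hi hiM.le)
    (hξ.apply_mem_Ici hi hiN.le)).2 hle
  have hh := ((strictAntiOn_invOneAddMul (c := γ / w) (by positivity)).le_iff_ge
    (hξ.sub_partialSum_mem_Ici hiN.le) (hη.sub_partialSum_mem_Ici hiM.le)).2 (by linarith)
  refine ((strictAntiOn_invOneAddMul hγ).le_iff_ge (hη.apply_mem_Ici (by omega) hiM)
    (hξ.apply_mem_Ici (by omega) hiN)).1 (le_of_mul_le_mul_left ?_ (sub_pos.2 hp1))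
  nlinarith [hξ.euler i hi hiN, hη.euler i hi hiM]

lemma apply_succ_lt (hξ : IsKKTPoint B γ p w N ξ) (hη : IsKKTPoint B γ p w M η) (hγ : 0 < γ)
    (hp : 0 ≤ p) (hp1 : p < 1) (hw : 0 < w) {i : ℕ} (hi : 1 ≤ i) (hiN : i < N) (hiM : i < M)
    (hlt : ξ i < η i) (hS : partialSum ξ i < partialSum η i) : ξ (i + 1) < η (i + 1) := by
  have hu := ((strictAntiOn_invOneAddMul hγ).lt_iff_gt (hη.apply_mem_Ici hi hiM.le)
    (hξ.apply_mem_Ici hi hiN.le)).2 hlt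
  have hh := ((strictAntiOn_invOneAddMul (c := γ / w) (by positivity)).lt_iff_gt
    (hξ.sub_partialSum_mem_Ici hiN.le) (hη.sub_partialSum_mem_Ici hiM.le)).2 (by linarith)
  refine ((strictAntiOn_invOneAddMul hγ).lt_iff_gt (hη.apply_mem_Ici (by omega) hiM)
    (hξ.apply_mem_Ici (by omega) hiN)).1 (lt_of_mul_lt_mul_left ?_ (sub_pos.2 hp1).le)
  nlinarith [hξ.euler i hi hiN, hη.euler i hi hiM]

lemma apply_le_of_apply_one_le (hξ : IsKKTPoint B γ p w N ξ) (hη : IsKKTPoint B γ p w M η)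
    (hγ : 0 < γ) (hp : 0 ≤ p) (hp1 : p < 1) (hw : 0 < w) (h1 : ξ 1 ≤ η 1) {i : ℕ} (hi : 1 ≤ i)
    (hiN : i ≤ N) (hiM : i ≤ M) : ξ i ≤ η i ∧ partialSum ξ i ≤ partialSum η i := by
  induction i, hi using Nat.le_induction with
  | base => exact ⟨h1, by simpa [partialSum] using h1⟩
  | succ i hi ih =>
    obtain ⟨hle, hS⟩ := ih (by omega) (by omega)
    have hle' := hξ.apply_succ_le hη hγ hp hp1 hw hi (by omega) (by omega) hle hS
    exact ⟨hle', by rw [partialSum_succ, partialSum_succ]; linarith⟩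

lemma apply_lt_of_apply_one_lt (hξ : IsKKTPoint B γ p w N ξ) (hη : IsKKTPoint B γ p w M η)
    (hγ : 0 < γ) (hp : 0 ≤ p) (hp1 : p < 1) (hw : 0 < w) (h1 : ξ 1 < η 1) {i : ℕ} (hi : 1 ≤ i)
    (hiN : i ≤ N) (hiM : i ≤ M) : ξ i < η i ∧ partialSum ξ i < partialSum η i := by
  induction i, hi using Nat.le_induction with
  | base => exact ⟨h1, by simpa [partialSum] using h1⟩
  | succ i hi ih =>
    obtain ⟨hlt, hS⟩ := ih (by omega) (by omega)
    have hlt' := hξ.apply_succ_lt hη hγ hp hp1 hw hi (by omega) (by omega) hlt hS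
    exact ⟨hlt', by rw [partialSum_succ, partialSum_succ]; linarith⟩

lemma apply_lt_of_horizon_lt (hξ : IsKKTPoint B γ p w N ξ) (hη : IsKKTPoint B γ p w M η)
    (hγ : 0 < γ) (hp : 0 ≤ p) (hp1 : p < 1) (hw : 0 < w) (hNM : N < M) {j : ℕ} (hj : 1 ≤ j)
    (hjN : j ≤ N) :
    η j < ξ j := by
  have hN : 1 ≤ N := hj.trans hjN
  have h1 : η 1 < ξ 1 := by
    by_contra! h1
    obtain ⟨hle, hS⟩ := hξ.apply_le_of_apply_one_le hη hγ hp hp1 hw h1 hN le_rfl hNM.le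
    have hu := ((strictAntiOn_invOneAddMul hγ).le_iff_ge (hη.apply_mem_Ici hN hNM.le)
      (hξ.apply_mem_Ici hN le_rfl)).2 hle
    have hh := ((strictAntiOn_invOneAddMul (c := γ / w) (by positivity)).le_iff_ge
      (hξ.sub_partialSum_mem_Ici le_rfl) (hη.sub_partialSum_mem_Ici hNM.le)).2 (by linarith)
    have := hη.invOneAddMul_sub_partialSum_lt hγ hp1 hw hN hNM
    linarith [hξ.terminal]
  exact (hη.apply_lt_of_apply_one_lt hξ hγ hp hp1 hw h1 hj (hjN.trans hNM.le) hjN).1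

end IsKKTPoint

/-- For each fixed `j`, the sequence `N ↦ ξ_j^{(N)*}` (over horizons `N ≥ j`) is
strictly decreasing in `N`: if `ξN` maximizes `T_N` and `ξM` maximizes `T_M` with
`j ≤ N < M`, then `ξM_j < ξN_j`. -/
theorem TN_maximizer_decreasing_in_N (B γ p : ℝ) (w : ℕ) (hB : 0 < B) (hγ : 0 < γ)
    (hw : 1 ≤ w) (hp : 0 < p) (hp1 : p < 1) (j N M : ℕ) (hj : 1 ≤ j) (hjN : j ≤ N)
    (hNM : N < M) (ξN ξM : ℕ → ℝ)
    (hξN : ξN ∈ adm B N) (hmaxN : ∀ η ∈ adm B N, TN B γ p w N η ≤ TN B γ p w N ξN)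
    (hξM : ξM ∈ adm B M) (hmaxM : ∀ η ∈ adm B M, TN B γ p w M η ≤ TN B γ p w M ξM) :
    ξM j < ξN j := by
  have hKKTN := isKKTPoint_of_isMaxOn hB hγ hp hp1 hw (hj.trans hjN) hξN (isMaxOn_iff.2 hmaxN)
  have hKKTM := isKKTPoint_of_isMaxOn hB hγ hp hp1 hw (by omega) hξM (isMaxOn_iff.2 hmaxM)
  exact hKKTN.apply_lt_of_horizon_lt hKKTM hγ hp.le hp1 hw hNM hj hjN
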